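/- arXiv:2108.03038 — 2 statements merged into one kernel-verified Lean document; each statement's English description precedes it below -/
import Mathlib

section
/- (Abelian property, configuration version) If α and β are two legal toppling sequences for the same configuration η with equal toppling counts, m_α = m_β as functions V → ℕ, then the resulting configurations agree: Φ_α η = Φ_β η. -/
/-- A particle configuration: `a x` active particles, `i x` inactive particles at site `x`. -/
structure Config (V : Type*) where
  a : V → ℕ
  i : V → ℕ

namespace ARW

variable {V : Type*} [DecidableEq V]

/-- The state-space constraint: no site holds both active and inactive particles. -/
def InOmega (η : Config V) : Prop := ∀ x, η.a x = 0 ∨ η.i x = 0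

/-- The sleep operator `τ^{x,s}` with capacities `w`. -/
def sleepOp (w : V → ℕ) (x : V) (η : Config V) : Config V where
  a z := if z = x then (if η.a x ≤ w x then 0 else η.a x) else η.a z
  i z := if z = x then (if η.a x ≤ w x then η.a x else 0) else η.i z

/-- The jump operator `τ^{x,y}` with capacities `w`. -/
def jumpOp (w : V → ℕ) (x y : V) (η : Config V) : Config V where
  a z := if z = x then η.a x - 1
    else if z = y then
      (if η.i y = 0 then η.a y + 1 else if η.i y + 1 ≤ w y then 0 else η.i y + 1)
    else η.a z
  i z := if z = x then 0
    else if z = y then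
      (if η.i y = 0 then 0 else if η.i y + 1 ≤ w y then η.i y + 1 else 0)
    else η.i z

end ARW

namespace ARW

variable {V : Type*} [DecidableEq V]

/-- A stack of instructions: at each site `x` and index `j`, either a sleep
instruction (`none`) or a jump instruction towards `some y`. -/
abbrev Stack (V : Type*) := V → ℕ → Option V

/-- A stack is valid for the graph `G` if jump instructions point to neighbours. -/
def ValidStack (G : SimpleGraph V) (τ : Stack V) : Prop :=
  ∀ x j y, τ x j = some y → G.Adj x y

/-- Apply a single instruction at site `x`. -/
def applyInstr (w : V → ℕ) (x : V) : Option V → Config V → Config V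
  | none => sleepOp w x
  | some y => jumpOp w x y

/-- Topple site `x`: use the next unused instruction of its stack and
increase the toppling counter. -/
def topple (w : V → ℕ) (τ : Stack V) (x : V) (s : Config V × (V → ℕ)) :
    Config V × (V → ℕ) :=
  (applyInstr w x (τ x (s.2 x)) s.1, Function.update s.2 x (s.2 x + 1))

/-- Apply a sequence of topplings (`Φ_α`). -/
def toppleSeq (w : V → ℕ) (τ : Stack V) : List V → Config V × (V → ℕ) → Config V × (V → ℕ)
  | [], s => s
  | x :: l, s => toppleSeq w τ l (topple w τ x s)

/-- A toppling sequence is legal if each toppled site is unstable at the moment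
it is toppled. -/
def Legal (w : V → ℕ) (τ : Stack V) : List V → Config V × (V → ℕ) → Prop
  | [], _ => True
  | x :: l, s => 0 < s.1.a x ∧ Legal w τ l (topple w τ x s)

/-- A configuration is stable in `K` if it has no unstable site of `K`. -/
def StableIn (K : Finset V) (η : Config V) : Prop := ∀ x ∈ K, η.a x = 0

end ARW


/-!
Each instruction at `x` acts in two local steps: a departure map rewrites the particle
counts at `x`, then an arrival map rewrites those at the target of the instruction. Local
steps at distinct sites commute, and at an active site (active particles, no sleeping ones)
an arriving particle commutes with a departure or a sleep attempt. Hence topplings of two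
distinct unstable sites commute, and neither stabilises the other. A toppling of a site
that is unstable now can therefore be moved to the front of any legal sequence containing
it. Equal toppling counts make `β` a permutation of `α`, and induction on `α` shows that
legal sequences that are permutations of each other reach the same state, counters included.
-/

namespace ARW

variable {V : Type*} [DecidableEq V]

omit [DecidableEq V] in
lemma InOmega.i_eq_zero_of_a_pos {η : Config V} (hη : InOmega η) {x : V} (hx : 0 < η.a x) :
    η.i x = 0 :=
  (hη x).resolve_left hx.ne'

-- Site maps act on the pair `(active, inactive)` of particle counts at one site.

def sleepSite (k : ℕ) (s : ℕ × ℕ) : ℕ × ℕ := if s.1 ≤ k then (0, s.1) else (s.1, 0)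

def leaveSite (s : ℕ × ℕ) : ℕ × ℕ := (s.1 - 1, 0)

def arriveSite (k : ℕ) (s : ℕ × ℕ) : ℕ × ℕ :=
  if s.2 = 0 then (s.1 + 1, 0) else if s.2 + 1 ≤ k then (0, s.2 + 1) else (s.2 + 1, 0)

def modifyAt (p : V) (f : ℕ × ℕ → ℕ × ℕ) (η : Config V) : Config V where
  a := Function.update η.a p (f (η.a p, η.i p)).1
  i := Function.update η.i p (f (η.a p, η.i p)).2

@[simp]
lemma modifyAt_a_of_ne {p q : V} (h : q ≠ p) (f : ℕ × ℕ → ℕ × ℕ) (η : Config V) :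
    (modifyAt p f η).a q = η.a q :=
  Function.update_of_ne h _ _

@[simp]
lemma modifyAt_i_of_ne {p q : V} (h : q ≠ p) (f : ℕ × ℕ → ℕ × ℕ) (η : Config V) :
    (modifyAt p f η).i q = η.i q :=
  Function.update_of_ne h _ _

lemma modifyAt_id (p : V) (η : Config V) : modifyAt p id η = η := by
  cases η
  simp [modifyAt]

lemma modifyAt_comm {p q : V} {f g : ℕ × ℕ → ℕ × ℕ} {η : Config V}
    (h : p = q → f (g (η.a p, η.i p)) = g (f (η.a p, η.i p))) :
    modifyAt p f (modifyAt q g η) = modifyAt q g (modifyAt p f η) := by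
  rcases eq_or_ne p q with rfl | hpq
  · simp [modifyAt, h rfl]
  · simp only [modifyAt, Function.update_of_ne hpq, Function.update_of_ne hpq.symm,
      Function.update_comm hpq]

def target (x : V) : Option V → V
  | none => x
  | some y => y

def departure (k : ℕ) : Option V → ℕ × ℕ → ℕ × ℕ
  | none => sleepSite k
  | some _ => leaveSite

def arrival (w : V → ℕ) (x : V) : Option V → ℕ × ℕ → ℕ × ℕ
  | none => id
  | some y => if y = x then id else arriveSite (w y)

lemma applyInstr_eq_modifyAt (w : V → ℕ) (x : V) (I : Option V) (η : Config V) :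
    applyInstr w x I η =
      modifyAt (target x I) (arrival w x I) (modifyAt x (departure (w x) I) η) := by
  cases η
  cases I with
  | none =>
    simp only [applyInstr, target, arrival, departure, modifyAt_id]
    simp only [sleepOp, modifyAt, sleepSite, Config.mk.injEq]
    constructor <;> funext z <;> by_cases hz : z = x <;> simp [hz] <;> split_ifs <;> rfl
  | some y =>
    simp only [applyInstr, target, arrival, departure]
    by_cases hy : y = x
    · subst hy
      simp only [if_true, modifyAt_id]
      simp only [jumpOp, modifyAt, leaveSite, Config.mk.injEq]
      constructor <;> funext z <;> by_cases hz : z = y <;> simp [hz]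
    · simp only [hy, if_false]
      simp only [jumpOp, modifyAt, leaveSite, arriveSite, Config.mk.injEq]
      constructor <;> funext z <;> by_cases hzx : z = x <;> by_cases hzy : z = y <;>
        simp_all [Ne.symm hy] <;> split_ifs <;> rfl

lemma departure_arrival_comm (w : V → ℕ) {x y : V} (I J : Option V) {s : ℕ × ℕ}
    (hs₁ : 0 < s.1) (hs₂ : s.2 = 0) (hJ : target y J = x) :
    departure (w x) I (arrival w y J s) = arrival w y J (departure (w x) I s) := by
  obtain ⟨a, i⟩ := s
  simp only at hs₁ hs₂
  subst hs₂
  cases J with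
  | none => rfl
  | some t =>
    simp only [target] at hJ
    subst hJ
    simp only [arrival]
    split_ifs
    · rfl
    · cases I <;> simp only [departure, sleepSite, leaveSite, arriveSite] <;> split_ifs <;>
        simp_all <;> omega

lemma arrival_comm (w : V → ℕ) {x y : V} (I J : Option V) (hIJ : target x I = target y J)
    (s : ℕ × ℕ) : arrival w x I (arrival w y J s) = arrival w y J (arrival w x I s) := by
  cases I with
  | none => rfl
  | some t =>
    cases J with
    | none => rfl
    | some u =>
      simp only [target] at hIJ
      subst hIJ
      simp only [arrival]
      split_ifs <;> rfl

lemma applyInstr_comm (w : V → ℕ) {x y : V} (I J : Option V) {η : Config V}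
    (hxy : x ≠ y) (hx : 0 < η.a x) (hix : η.i x = 0) (hy : 0 < η.a y) (hiy : η.i y = 0) :
    applyInstr w x I (applyInstr w y J η) = applyInstr w y J (applyInstr w x I η) := by
  simp only [applyInstr_eq_modifyAt]
  have hx' : 0 < (modifyAt y (departure (w y) J) η).a x := by simpa [hxy]
  have hix' : (modifyAt y (departure (w y) J) η).i x = 0 := by simpa [hxy]
  have hy' : 0 < (modifyAt x (departure (w x) I) η).a y := by simpa [hxy.symm]
  have hiy' : (modifyAt x (departure (w x) I) η).i y = 0 := by simpa [hxy.symm]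
  rw [modifyAt_comm (p := x) fun h => departure_arrival_comm w I J hx' hix' h.symm,
    modifyAt_comm (p := x) (q := y) fun h => absurd h hxy,
    modifyAt_comm fun h => arrival_comm w I J h _,
    modifyAt_comm (p := target x I) (q := y) fun h => by
      rw [h]; exact (departure_arrival_comm w J I hy' hiy' h).symm]

lemma inOmega_applyInstr (w : V → ℕ) (x : V) (I : Option V) {η : Config V}
    (hη : InOmega η) : InOmega (applyInstr w x I η) := by
  intro z
  cases I <;> simp only [applyInstr, sleepOp, jumpOp] <;> split_ifs <;>
    first | (left; rfl) | (right; rfl) | omega | exact hη z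

lemma applyInstr_a_pos_of_ne (w : V → ℕ) {x y : V} (I : Option V) {η : Config V}
    (hxy : x ≠ y) (hx : 0 < η.a x) (hix : η.i x = 0) : 0 < (applyInstr w y I η).a x := by
  cases I <;> simp only [applyInstr, sleepOp, jumpOp] <;> split_ifs <;> simp_all

section Toppling

variable (w : V → ℕ) (τ : Stack V)

lemma inOmega_topple (x : V) {s : Config V × (V → ℕ)} (hs : InOmega s.1) :
    InOmega (topple w τ x s).1 :=
  inOmega_applyInstr w x _ hs

lemma topple_a_pos_of_ne {x y : V} {s : Config V × (V → ℕ)} (hxy : x ≠ y) (hs : InOmega s.1)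
    (hx : 0 < s.1.a x) : 0 < (topple w τ y s).1.a x :=
  applyInstr_a_pos_of_ne w _ hxy hx (hs.i_eq_zero_of_a_pos hx)

lemma topple_comm {x y : V} {s : Config V × (V → ℕ)} (hxy : x ≠ y) (hs : InOmega s.1)
    (hx : 0 < s.1.a x) (hy : 0 < s.1.a y) :
    topple w τ x (topple w τ y s) = topple w τ y (topple w τ x s) := by
  simp only [topple, Function.update_of_ne hxy, Function.update_of_ne hxy.symm,
    applyInstr_comm w _ _ hxy hx (hs.i_eq_zero_of_a_pos hx) hy (hs.i_eq_zero_of_a_pos hy),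
    Function.update_comm hxy.symm]

lemma Legal.cons_erase {x : V} :
    ∀ {β : List V} {s : Config V × (V → ℕ)}, InOmega s.1 → Legal w τ β s → 0 < s.1.a x →
      x ∈ β → Legal w τ (x :: β.erase x) s ∧
        toppleSeq w τ (x :: β.erase x) s = toppleSeq w τ β s
  | [], _, _, _, _, hmem => absurd hmem List.not_mem_nil
  | y :: β, s, hs, ⟨hy, hβ⟩, hx, hmem => by
    rcases eq_or_ne y x with rfl | hyx
    · rw [List.erase_cons_head]
      exact ⟨⟨hy, hβ⟩, rfl⟩
    have hxβ : x ∈ β := (List.mem_cons.mp hmem).resolve_left hyx.symm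
    obtain ⟨⟨-, hlegal⟩, hseq⟩ := Legal.cons_erase (inOmega_topple w τ y hs) hβ
      (topple_a_pos_of_ne w τ hyx.symm hs hx) hxβ
    have hcomm := topple_comm w τ hyx hs hy hx
    rw [List.erase_cons_tail (by simpa using hyx)]
    refine ⟨⟨hx, topple_a_pos_of_ne w τ hyx hs hy, ?_⟩, ?_⟩
    · rwa [hcomm]
    · exact (congrArg (toppleSeq w τ _) hcomm).trans hseq

lemma toppleSeq_eq_of_perm :
    ∀ {α β : List V} {s : Config V × (V → ℕ)}, α.Perm β → InOmega s.1 →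
      Legal w τ α s → Legal w τ β s → toppleSeq w τ α s = toppleSeq w τ β s
  | [], β, _, hαβ, _, _, _ => by rw [List.nil_perm.mp hαβ]
  | x :: α, β, s, hαβ, hs, ⟨hx, hα⟩, hβ => by
    have hxβ : x ∈ β := hαβ.subset List.mem_cons_self
    obtain ⟨⟨-, hβ'⟩, hseq⟩ := Legal.cons_erase w τ hs hβ hx hxβ
    rw [← hseq]
    exact toppleSeq_eq_of_perm (α := α) ((hαβ.trans (List.perm_cons_erase hxβ)).cons_inv)
      (inOmega_topple w τ x hs) hα hβ'

end Toppling

end ARW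

open ARW in
theorem abelian_config_general {V : Type*} [DecidableEq V]
    (w : V → ℕ) (τ : Stack V)
    (η : Config V) (hΩ : InOmega η) (α β : List V)
    (hα : Legal w τ α (η, fun _ => 0)) (hβ : Legal w τ β (η, fun _ => 0))
    (hm : ∀ x, α.count x = β.count x) :
    (toppleSeq w τ α (η, fun _ => 0)).1 = (toppleSeq w τ β (η, fun _ => 0)).1 := by
  rw [toppleSeq_eq_of_perm w τ (List.perm_iff_count.mpr hm) hΩ hα hβ]

open ARW in
/-- Abelian property, configuration version: two legal toppling sequences for the
same configuration with equal toppling counts produce the same configuration. -/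
theorem abelian_config {V : Type*} [DecidableEq V] (G : SimpleGraph V)
    (w : V → ℕ) (τ : Stack V) (hτ : ValidStack G τ)
    (η : Config V) (hΩ : InOmega η) (α β : List V)
    (hα : Legal w τ α (η, fun _ => 0)) (hβ : Legal w τ β (η, fun _ => 0))
    (hm : ∀ x, α.count x = β.count x) :
    (toppleSeq w τ α (η, fun _ => 0)).1 = (toppleSeq w τ β (η, fun _ => 0)).1 :=
  abelian_config_general w τ η hΩ α β hα hβ hm
end

section
/- (Propagation of infinite topplings) Fix an environment w : V → ℕ and i.i.d. instruction stacks where at each site each instruction is independently a jump to a fixed neighbour with probability 1/(d(1+λ)) > 0. Almost surely, for any two vertices x, y: if the total odometer satisfies m_V(x) = ∞, then m_V(y) = ∞. (In particular the event of fixation does not depend on the choice of the observed vertex.) -/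
namespace ARW

variable {V : Type*} [DecidableEq V]

/-- The total odometer `m_V(x)`: the supremum, over all legal toppling
sequences for `η` (equivalently, over stabilisations of larger and larger
finite volumes), of the number of topplings at `x`. -/
noncomputable def totalOdometer (w : V → ℕ) (τ : Stack V) (η : Config V) (x : V) : ℕ∞ :=
  ⨆ α : {l : List V // Legal w τ l (η, fun _ => 0)}, ((α : List V).count x : ℕ∞)

end ARW

/-!
Deterministically, if `x` topples infinitely often and infinitely many instructions in the stack
at `x` are jumps to a neighbour `y`, then unboundedly many particles are sent to `y`. Along any
legal toppling sequence, the particles present at `y` plus the topplings of `y` dominate the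
arrivals from `x`, while the sleeping particles at `y` stay bounded by `max (η.i y) (w y)`; so once
`x` has toppled enough, `y` carries more than `w y + M` active particles and can legally topple
`M` more times. By the second Borel–Cantelli lemma, almost surely every directed edge carries
infinitely many jump instructions, and the claim propagates along a path from `x` to `y`.
-/

open MeasureTheory ProbabilityTheory Filter

namespace ProbabilityTheory

variable {Ω β : Type*} {mΩ : MeasurableSpace Ω} {mβ : MeasurableSpace β} {P : Measure Ω}

lemma iIndepFun.iIndepSet_preimage {ι : Type*} {X : ι → Ω → β} (hX : ∀ i, Measurable (X i))
    (hind : iIndepFun X P) {S : Set β} (hS : MeasurableSet S) :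
    iIndepSet (fun i => X i ⁻¹' S) P :=
  (iIndepSet_iff_meas_biInter fun i => hX i hS).2 fun s =>
    hind.measure_inter_preimage_eq_mul s fun _ _ => hS

lemma ae_frequently_mem_of_iIndepFun {X : ℕ → Ω → β} (hX : ∀ j, Measurable (X j))
    (hind : iIndepFun X P) {S : Set β} (hS : MeasurableSet S)
    (hsum : ∑' j, P (X j ⁻¹' S) = ⊤) :
    ∀ᵐ ω ∂P, ∃ᶠ j in atTop, X j ω ∈ S := by
  have hsm : ∀ j, MeasurableSet (X j ⁻¹' S) := fun j => hX j hS
  have hlimsup := measure_limsup_eq_one hsm (hind.iIndepSet_preimage hX hS) hsum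
  have : IsProbabilityMeasure P := hind.isProbabilityMeasure
  have hnull : P (limsup (fun j => X j ⁻¹' S) atTop)ᶜ = 0 := by
    rw [measure_compl (MeasurableSet.measurableSet_limsup hsm) (measure_ne_top P _), hlimsup,
      measure_univ, tsub_self]
  filter_upwards [measure_eq_zero_iff_ae_notMem.1 hnull] with ω hω
  rwa [Set.notMem_compl_iff, mem_limsup_iff_frequently_mem] at hω

end ProbabilityTheory

namespace ARW

variable {V : Type*} [DecidableEq V]

theorem legal_append {w : V → ℕ} {τ : Stack V} {l₁ l₂ : List V} {s : Config V × (V → ℕ)} :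
    Legal w τ (l₁ ++ l₂) s ↔ Legal w τ l₁ s ∧ Legal w τ l₂ (toppleSeq w τ l₁ s) := by
  induction l₁ generalizing s with
  | nil => simp [Legal, toppleSeq]
  | cons a l ih => simp [Legal, toppleSeq, ih, and_assoc]

theorem topple_snd (w : V → ℕ) (τ : Stack V) (z : V) (s : Config V × (V → ℕ)) (v : V) :
    (topple w τ z s).2 v = s.2 v + if z = v then 1 else 0 := by
  by_cases h : z = v
  · subst h; simp [topple]
  · simp [topple, h, Ne.symm h]

theorem toppleSeq_snd (w : V → ℕ) (τ : Stack V) (l : List V) (s : Config V × (V → ℕ)) (v : V) :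
    (toppleSeq w τ l s).2 v = s.2 v + l.count v := by
  induction l generalizing s with
  | nil => rfl
  | cons z l ih =>
    rw [toppleSeq, ih, topple_snd, List.count_cons]
    by_cases h : z = v
    · subst h; simp; omega
    · simp [h]

def jumpCount (τ : Stack V) (x y : V) (n : ℕ) : ℕ :=
  ((Finset.range n).filter fun k => τ x k = some y).card

theorem jumpCount_succ (τ : Stack V) (x y : V) (n : ℕ) :
    jumpCount τ x y (n + 1) = jumpCount τ x y n + if τ x n = some y then 1 else 0 := by
  rw [jumpCount, jumpCount, Finset.range_add_one, Finset.filter_insert]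
  split
  · rw [Finset.card_insert_of_notMem (by simp)]
  · rfl

theorem jumpCount_mono (τ : Stack V) (x y : V) : Monotone (jumpCount τ x y) := fun _ _ h =>
  Finset.card_le_card (Finset.filter_subset_filter _ (Finset.range_subset_range.2 h))

theorem exists_le_jumpCount {τ : Stack V} {x y : V} (hinf : {j | τ x j = some y}.Infinite)
    (N : ℕ) : ∃ n, N ≤ jumpCount τ x y n := by
  obtain ⟨T, hTsub, hTcard⟩ := hinf.exists_subset_card_eq N
  refine ⟨T.sup id + 1, hTcard ▸ Finset.card_le_card fun k hk => ?_⟩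
  simp only [Finset.mem_filter, Finset.mem_range]
  exact ⟨Nat.lt_succ_of_le (Finset.le_sup (f := id) hk), hTsub hk⟩

theorem InOmega.sleepOp {c : Config V} (hc : InOmega c) (w : V → ℕ) (z : V) :
    InOmega (sleepOp w z c) := by
  intro v
  by_cases hv : v = z
  · subst hv; simp only [ARW.sleepOp]; split_ifs <;> simp
  · simpa [ARW.sleepOp, hv] using hc v

theorem InOmega.jumpOp {c : Config V} (hc : InOmega c) (w : V → ℕ) (z u : V) :
    InOmega (jumpOp w z u c) := by
  intro v
  by_cases h1 : v = z
  · subst h1; simp [ARW.jumpOp]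
  · by_cases h2 : v = u
    · subst h2; simp only [ARW.jumpOp, if_neg h1]; split_ifs <;> simp
    · simpa [ARW.jumpOp, h1, h2] using hc v

theorem InOmega.applyInstr {c : Config V} (hc : InOmega c) (w : V → ℕ) (z : V) :
    ∀ ι, InOmega (applyInstr w z ι c)
  | none => hc.sleepOp w z
  | some u => hc.jumpOp w z u

theorem InOmega.toppleSeq (w : V → ℕ) (τ : Stack V) :
    ∀ (l : List V) {s : Config V × (V → ℕ)}, InOmega s.1 → InOmega (toppleSeq w τ l s).1
  | [], _, hs => hs
  | z :: l, _, hs => InOmega.toppleSeq w τ l (hs.applyInstr w z _)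

theorem inactive_applyInstr_le (w : V → ℕ) (z : V) (ι : Option V) (c : Config V) (y : V) :
    (applyInstr w z ι c).i y ≤ max (c.i y) (w y) := by
  by_cases hyz : y = z
  · subst hyz
    rcases ι with _ | u <;> simp only [applyInstr, ARW.sleepOp, ARW.jumpOp] <;> split_ifs <;> omega
  rcases ι with _ | u
  · simp only [applyInstr, ARW.sleepOp, if_neg hyz]; omega
  by_cases hyu : y = u
  · subst hyu
    simp only [applyInstr, ARW.jumpOp, if_neg hyz]; split_ifs <;> omega
  · simp only [applyInstr, ARW.jumpOp, if_neg hyz, if_neg hyu]; omega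

theorem inactive_toppleSeq_le (w : V → ℕ) (τ : Stack V) (y : V) :
    ∀ (l : List V) (s : Config V × (V → ℕ)), (toppleSeq w τ l s).1.i y ≤ max (s.1.i y) (w y)
  | [], _ => le_max_left _ _
  | z :: l, s => (inactive_toppleSeq_le w τ y l _).trans <|
      (max_le_max_right _ (inactive_applyInstr_le w z _ s.1 y)).trans (by omega)

/-- Toppling an active site `z` preserves the number of particles at `y`, except that a jump
into `y ≠ z` adds one and a jump out of `y = z` removes one. -/
theorem mass_applyInstr {w : V → ℕ} {c : Config V} (hc : InOmega c) {z : V} (hz : 0 < c.a z)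
    (ι : Option V) (y : V) :
    c.a y + c.i y + (if ι = some y ∧ z ≠ y then 1 else 0) ≤
      (applyInstr w z ι c).a y + (applyInstr w z ι c).i y + (if z = y then 1 else 0) := by
  have hzi : c.i z = 0 := (hc z).resolve_left hz.ne'
  by_cases hyz : y = z
  · subst hyz
    simp only [ne_eq, not_true_eq_false, and_false, if_false, if_true]
    rcases ι with _ | u
    · simp only [applyInstr, ARW.sleepOp, if_true]; split_ifs <;> omega
    · simp only [applyInstr, ARW.jumpOp, if_true]; omega
  rcases ι with _ | u
  · simp [applyInstr, ARW.sleepOp, hyz]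
  by_cases hyu : y = u
  · subst hyu
    simp only [applyInstr, ARW.jumpOp, if_neg hyz, Ne.symm hyz]
    rcases hc y with hy | hy <;> split_ifs <;> simp_all
  · simp [applyInstr, ARW.jumpOp, hyz, hyu, Ne.symm hyu]

theorem jumpCount_topple_le (w : V → ℕ) (τ : Stack V) {x y : V} (hxy : x ≠ y) (z : V)
    (s : Config V × (V → ℕ)) :
    jumpCount τ x y ((topple w τ z s).2 x) ≤
      jumpCount τ x y (s.2 x) + if τ z (s.2 z) = some y ∧ z ≠ y then 1 else 0 := by
  rw [topple_snd]
  by_cases hzx : z = x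
  · subst hzx
    simp [jumpCount_succ, hxy]
  · simp [hzx]

theorem jumpCount_le_toppleSeq (w : V → ℕ) (τ : Stack V) {x y : V} (hxy : x ≠ y) :
    ∀ (l : List V) {s : Config V × (V → ℕ)}, Legal w τ l s → InOmega s.1 →
      jumpCount τ x y (s.2 x) ≤ s.1.a y + s.1.i y + s.2 y →
      jumpCount τ x y ((toppleSeq w τ l s).2 x) ≤
        (toppleSeq w τ l s).1.a y + (toppleSeq w τ l s).1.i y + (toppleSeq w τ l s).2 y
  | [], _, _, _, hs => hs
  | z :: l, s, hleg, hΩ, hs => by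
    refine jumpCount_le_toppleSeq w τ hxy l hleg.2 (hΩ.applyInstr w z _) ?_
    have hmass := mass_applyInstr (w := w) hΩ hleg.1 (τ z (s.2 z)) y
    have hjump := jumpCount_topple_le w τ hxy z s
    rw [topple_snd w τ z s y]
    exact hjump.trans (by dsimp only [topple]; omega)

theorem legal_replicate (w : V → ℕ) (τ : Stack V) (y : V) :
    ∀ (t : ℕ) (s : Config V × (V → ℕ)), w y + t ≤ s.1.a y → Legal w τ (List.replicate t y) s
  | 0, _, _ => trivial
  | t + 1, s, h => by
    refine ⟨by omega, legal_replicate w τ y t _ ?_⟩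
    rcases hinstr : τ y (s.2 y) with _ | u <;> simp only [topple, hinstr]
    · have hne : ¬ s.1.a y ≤ w y := by omega
      simp [applyInstr, sleepOp, hne]
      omega
    · simp [applyInstr, jumpOp]
      omega

theorem totalOdometer_eq_top_iff (w : V → ℕ) (τ : Stack V) (η : Config V) (z : V) :
    totalOdometer w τ η z = ⊤ ↔
      ∀ M : ℕ, ∃ l : List V, Legal w τ l (η, fun _ => 0) ∧ M ≤ l.count z := by
  rw [totalOdometer, iSup_eq_top]
  constructor
  · intro h M
    obtain ⟨⟨l, hl⟩, hlt⟩ := h M (ENat.natCast_lt_top M)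
    exact ⟨l, hl, by exact_mod_cast hlt.le⟩
  · intro h b hb
    lift b to ℕ using hb.ne
    obtain ⟨l, hl, hc⟩ := h (b + 1)
    exact ⟨⟨l, hl⟩, by exact_mod_cast Nat.lt_of_lt_of_le b.lt_succ_self hc⟩

theorem totalOdometer_eq_top_of_infinite_jumps (w : V → ℕ) (τ : Stack V) {η : Config V}
    (hΩ : InOmega η) {x y : V} (hxy : x ≠ y) (hinf : {j | τ x j = some y}.Infinite)
    (hx : totalOdometer w τ η x = ⊤) : totalOdometer w τ η y = ⊤ := by
  rw [totalOdometer_eq_top_iff] at hx ⊢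
  intro M
  obtain ⟨n, hn⟩ := exists_le_jumpCount hinf (max (η.i y) (w y) + w y + 2 * M)
  obtain ⟨l, hl, hlx⟩ := hx n
  by_cases hly : M ≤ l.count y
  · exact ⟨l, hl, hly⟩
  set s := toppleSeq w τ l (η, fun _ => 0)
  have hjump : jumpCount τ x y (s.2 x) ≤ s.1.a y + s.1.i y + s.2 y :=
    jumpCount_le_toppleSeq w τ hxy l hl hΩ (by simp [jumpCount])
  have hsleep : s.1.i y ≤ max (η.i y) (w y) := inactive_toppleSeq_le w τ y l _
  have hsx : s.2 x = l.count x := by simp [s, toppleSeq_snd]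
  have hsy : s.2 y = l.count y := by simp [s, toppleSeq_snd]
  have hactive : w y + M ≤ s.1.a y := by
    have := jumpCount_mono τ x y (hsx ▸ hlx : n ≤ s.2 x)
    omega
  refine ⟨l ++ List.replicate M y, legal_append.2 ⟨hl, legal_replicate w τ y M _ hactive⟩, ?_⟩
  simp

theorem totalOdometer_eq_top_of_reachable (w : V → ℕ) (τ : Stack V) {η : Config V}
    (hΩ : InOmega η) {G : SimpleGraph V}
    (hjumps : ∀ a b : V, G.Adj a b → {j | τ a j = some b}.Infinite) {x y : V}
    (hxy : G.Reachable x y) (hx : totalOdometer w τ η x = ⊤) : totalOdometer w τ η y = ⊤ := by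
  obtain ⟨p⟩ := hxy
  induction p with
  | nil => exact hx
  | cons h _ ih => exact ih (totalOdometer_eq_top_of_infinite_jumps w τ hΩ h.ne (hjumps _ _ h) hx)

end ARW

open ARW MeasureTheory ProbabilityTheory in
theorem propagation_of_infinite_topplings_general {V : Type*} [DecidableEq V] [Countable V]
    (G : SimpleGraph V) (hpre : G.Preconnected) (d : ℕ) (hd : 0 < d)
    {Ωs : Type*} [MeasurableSpace Ωs] (P : Measure Ωs) [IsProbabilityMeasure P]
    (lam : ℝ) (hlam : 0 < lam)
    (τ : Ωs → Stack V)
    (hmeas : ∀ x j, Measurable[_, ⊤] fun ω => τ ω x j)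
    (hindep : iIndepFun (m := fun _ : V × ℕ => (⊤ : MeasurableSpace (Option V)))
      (fun p ω => τ ω p.1 p.2) P)
    (hjump : ∀ x j y, G.Adj x y →
      P {ω | τ ω x j = some y} = ENNReal.ofReal (1 / (d * (1 + lam))))
    (w : V → ℕ) (η : Config V) (hΩ : InOmega η) :
    ∀ᵐ ω ∂P, ∀ x y : V,
      totalOdometer w (τ ω) η x = ⊤ → totalOdometer w (τ ω) η y = ⊤ := by
  have hprob : ENNReal.ofReal (1 / (d * (1 + lam))) ≠ 0 :=
    (ENNReal.ofReal_pos.2 (by positivity)).ne'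
  have hedge : ∀ x y : V, G.Adj x y → ∀ᵐ ω ∂P, {j | τ ω x j = some y}.Infinite := by
    intro x y hxy
    have hfreq := ae_frequently_mem_of_iIndepFun (X := fun j ω => τ ω x j) (S := {some y})
      (hmeas x) (hindep.precomp fun _ _ h => (Prod.mk.inj h).2) trivial
      (by simpa [Set.preimage, hjump x _ y hxy] using
        ENNReal.tsum_const_eq_top_of_ne_zero (α := ℕ) hprob)
    filter_upwards [hfreq] with ω hω
    exact Nat.frequently_atTop_iff_infinite.1 hω
  have hall : ∀ᵐ ω ∂P, ∀ e : {e : V × V // G.Adj e.1 e.2},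
      {j | τ ω e.1.1 j = some e.1.2}.Infinite :=
    ae_all_iff.2 fun e => hedge _ _ e.2
  filter_upwards [hall] with ω hω x y
  exact totalOdometer_eq_top_of_reachable w (τ ω) hΩ (fun a b hab => hω ⟨(a, b), hab⟩) (hpre x y)

open ARW MeasureTheory ProbabilityTheory in
/-- Propagation of infinite topplings: with i.i.d. instruction stacks in which,
at every site, each instruction is a jump towards any fixed neighbour with
probability `1/(d(1+λ)) > 0`, almost surely, for any two vertices `x, y`, if
the total odometer at `x` is infinite then so is the total odometer at `y`. -/
theorem propagation_of_infinite_topplings {V : Type*} [DecidableEq V] [Countable V]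
    (G : SimpleGraph V) (hpre : G.Preconnected) (d : ℕ) (hd : 0 < d)
    (hdeg : ∀ v : V, (G.neighborSet v).ncard = d)
    {Ωs : Type*} [MeasurableSpace Ωs] (P : Measure Ωs) [IsProbabilityMeasure P]
    (lam : ℝ) (hlam : 0 < lam)
    (τ : Ωs → Stack V)
    (hmeas : ∀ x j, Measurable[_, ⊤] fun ω => τ ω x j)
    (hindep : iIndepFun (m := fun _ : V × ℕ => (⊤ : MeasurableSpace (Option V)))
      (fun p ω => τ ω p.1 p.2) P)
    (hjump : ∀ x j y, G.Adj x y →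
      P {ω | τ ω x j = some y} = ENNReal.ofReal (1 / (d * (1 + lam))))
    (w : V → ℕ) (η : Config V) (hΩ : InOmega η) :
    ∀ᵐ ω ∂P, ∀ x y : V,
      totalOdometer w (τ ω) η x = ⊤ → totalOdometer w (τ ω) η y = ⊤ :=
  propagation_of_infinite_topplings_general G hpre d hd P lam hlam τ hmeas hindep hjump w η hΩ
end
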